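/- Let σ₁, σ₃ be positive Borel measures on ℝⁿ, let Q₀ be a dyadic cube, let f₁ ∈ L^{p₁}(dσ₁) and f₃ be nonnegative and supported in Q₀, and let F₁, F₃ be the collections of principal cubes for (f₁,σ₁) and (f₃,σ₃) respectively. Then ∑_{H ∈ F₃} ∑_{H' ∈ ch¹_{F₃}(H)} (⨍_{H'} f₁ dσ₁)^{p₁} σ₁(H') ≤ ∑_{F ∈ F₁} (2 ⨍_F f₁ dσ₁)^{p₁} σ₁(F), where ch¹_{F₃}(H) := { H' ∈ ch_{F₃}(H) : π_{F₃}(π_{F₁}(H')) = H }. -/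

import Mathlib

open MeasureTheory ENNReal Set
open scoped BigOperators NNReal

noncomputable section

/-- Points of `ℝⁿ`, realized as functions `Fin n → ℝ`. -/
abbrev RN (n : ℕ) := Fin n → ℝ

/-- A dyadic cube `Q = 2^{-k}(m + [0,1)^n)` in `ℝⁿ`, recorded by its generation `k`
and lower-left corner `m`. -/
structure DyadicCube (n : ℕ) where
  k : ℤ
  m : Fin n → ℤ

namespace DyadicCube

variable {n : ℕ}

/-- The set of points of the dyadic cube `2^{-k}(m + [0,1)^n)`. -/
def carrier (Q : DyadicCube n) : Set (RN n) :=
  {x | ∀ i, (Q.m i : ℝ) * 2 ^ (-Q.k) ≤ x i ∧ x i < ((Q.m i : ℝ) + 1) * 2 ^ (-Q.k)}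

instance : Countable (DyadicCube n) := by
  have h : Function.Injective fun Q : DyadicCube n => (Q.k, Q.m) := by
    intro a b hab
    cases a; cases b
    simp only [Prod.mk.injEq] at hab
    simp [hab.1, hab.2]
  exact h.countable

/-- The indicator function `1_Q` of a dyadic cube, with values in `ℝ≥0∞`. -/
def indFun (Q : DyadicCube n) : RN n → ℝ≥0∞ :=
  Q.carrier.indicator 1

/-- The dual exponent `p' = p/(p-1)`. -/
def dual (p : ℝ) : ℝ := p / (p - 1)

open Classical in
/-- The kernel `K(Q,μ)` given by `K(Q,μ)(Q') = K(Q') μ(Q')` for `Q' ⊆ Q` and `0` otherwise. -/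
def KQ (K : DyadicCube n → ℝ≥0∞) (μ : Measure (RN n)) (Q : DyadicCube n) :
    DyadicCube n → ℝ≥0∞ :=
  fun Q' => if Q'.carrier ⊆ Q.carrier then K Q' * μ Q'.carrier else 0

open Classical in
/-- The function `∑_{Q' ⊆ Q} K(Q') μ(Q') 1_{Q'}(x)`. -/
def kernelSum (K : DyadicCube n → ℝ≥0∞) (μ : Measure (RN n)) (Q : DyadicCube n)
    (x : RN n) : ℝ≥0∞ :=
  ∑' Q' : DyadicCube n,
    (if Q'.carrier ⊆ Q.carrier then K Q' * μ Q'.carrier else 0) * indFun Q' x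

open Classical in
/-- The function `K̄_μ(Q)(x) = μ(Q)⁻¹ ∑_{Q' ⊆ Q} K(Q') μ(Q') 1_{Q'}(x)`, interpreted as `0`
when `μ(Q) = 0`. -/
def kbar (K : DyadicCube n → ℝ≥0∞) (μ : Measure (RN n)) (Q : DyadicCube n)
    (x : RN n) : ℝ≥0∞ :=
  if μ Q.carrier = 0 then 0 else (μ Q.carrier)⁻¹ * kernelSum K μ Q x

/-- The discrete Wolff potential
`W^p_{K,μ}[ν](x) = ∑_Q K(Q) μ(Q) (∫_Q K̄_μ(Q) dν)^{p-1} 1_Q(x)`. -/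
def wolff (K : DyadicCube n → ℝ≥0∞) (μ ν : Measure (RN n)) (p : ℝ) (x : RN n) : ℝ≥0∞ :=
  ∑' Q : DyadicCube n,
    K Q * μ Q.carrier * (∫⁻ y in Q.carrier, kbar K μ Q y ∂ν) ^ (p - 1) * indFun Q x

/-- The average `⨍_Q f dμ = μ(Q)⁻¹ ∫_Q f dμ` (in `ℝ≥0∞`; it is `0` when `μ(Q) = 0`). -/
def avg (σ : Measure (RN n)) (f : RN n → ℝ) (Q : DyadicCube n) : ℝ≥0∞ :=
  (σ Q.carrier)⁻¹ * ∫⁻ x in Q.carrier, ENNReal.ofReal (f x) ∂σ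

/-- The dyadic Hardy–Littlewood maximal operator
`M_σ f(x) = sup_{Q ∋ x} ⨍_Q |f| dσ`. -/
def dyadicMaximal (σ : Measure (RN n)) (f : RN n → ℝ) (x : RN n) : ℝ≥0∞ :=
  ⨆ (Q : DyadicCube n) (_ : x ∈ Q.carrier), avg σ (fun y => |f y|) Q

/-- `ch_F(F)`: the maximal dyadic cubes `Q ⊆ F` with `⨍_Q f dσ > 2 ⨍_F f dσ`. -/
def chPrin (σ : Measure (RN n)) (f : RN n → ℝ) (F : DyadicCube n) : Set (DyadicCube n) :=
  {Q | Q.carrier ⊆ F.carrier ∧ 2 * avg σ f F < avg σ f Q ∧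
    ∀ R : DyadicCube n, R.carrier ⊆ F.carrier → Q.carrier ⊆ R.carrier →
      2 * avg σ f F < avg σ f R → R = Q}

/-- The generations `F^k` of principal cubes for the pair `(f, σ)` starting from `Q₀`. -/
def prinLevel (σ : Measure (RN n)) (f : RN n → ℝ) (Q₀ : DyadicCube n) :
    ℕ → Set (DyadicCube n)
  | 0 => {Q₀}
  | k + 1 => ⋃ F ∈ prinLevel σ f Q₀ k, chPrin σ f F

/-- The collection `F = ⋃_k F^k` of principal cubes for the pair `(f, σ)`. -/
def principal (σ : Measure (RN n)) (f : RN n → ℝ) (Q₀ : DyadicCube n) :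
    Set (DyadicCube n) :=
  ⋃ k, prinLevel σ f Q₀ k

/-- `F` is the stopping parent `π_F(Q)` of `Q`: the minimal principal cube containing `Q`. -/
def IsStoppingParent (σ : Measure (RN n)) (f : RN n → ℝ) (Q₀ Q F : DyadicCube n) : Prop :=
  F ∈ principal σ f Q₀ ∧ Q.carrier ⊆ F.carrier ∧
    ∀ F' ∈ principal σ f Q₀, Q.carrier ⊆ F'.carrier → F.carrier ⊆ F'.carrier

open Classical in
/-- The stopping parent `π_F(Q)`, the minimal principal cube containing `Q`
(junk value `Q₀` if there is none). -/
def stoppingParent (σ : Measure (RN n)) (f : RN n → ℝ) (Q₀ Q : DyadicCube n) :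
    DyadicCube n :=
  if h : ∃ F, IsStoppingParent σ f Q₀ Q F then h.choose else Q₀

/-- The set `E_F(F) = F \ ⋃_{F' ∈ ch_F(F)} F'`. -/
def ESet (σ : Measure (RN n)) (f : RN n → ℝ) (F : DyadicCube n) : Set (RN n) :=
  F.carrier \ ⋃ F' ∈ chPrin σ f F, F'.carrier

/-- `ch^i_{F₃}(H) = {H' ∈ ch_{F₃}(H) : π_{F₃}(π_{F_i}(H')) = H}`. -/
def chStop (σi σ₃ : Measure (RN n)) (fi f₃ : RN n → ℝ) (Q₀ H : DyadicCube n) :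
    Set (DyadicCube n) :=
  {H' | H' ∈ chPrin σ₃ f₃ H ∧
    stoppingParent σ₃ f₃ Q₀ (stoppingParent σi fi Q₀ H') = H}

/-- The modified function
`f_i^H = f_i 1_{E_{F₃}(H)} + ∑_{H' ∈ ch^i_{F₃}(H)} (⨍_{H'} f_i dσ_i) 1_{H'}`. -/
def modFun (σi σ₃ : Measure (RN n)) (fi f₃ : RN n → ℝ) (Q₀ H : DyadicCube n)
    (x : RN n) : ℝ≥0∞ :=
  (ESet σ₃ f₃ H).indicator (fun y => ENNReal.ofReal (fi y)) x +
    ∑' H' : chStop σi σ₃ fi f₃ Q₀ H,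
      (H'.1.carrier.indicator (fun _ => avg σi fi H'.1) x)

/-- The bilinear embedding inequality
`∑_Q K(Q) |∫_Q f₁ dσ₁| |∫_Q f₂ dσ₂| ≤ c ‖f₁‖_{L^{p₁}(σ₁)} ‖f₂‖_{L^{p₂}(σ₂)}`. -/
def bilinearEmbedding (K : DyadicCube n → ℝ≥0∞) (σ₁ σ₂ : Measure (RN n))
    (p₁ p₂ : ℝ) (c : ℝ≥0∞) : Prop :=
  ∀ f₁ f₂ : RN n → ℝ,
    MemLp f₁ (ENNReal.ofReal p₁) σ₁ → MemLp f₂ (ENNReal.ofReal p₂) σ₂ →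
    (∑' Q : DyadicCube n,
        K Q * ENNReal.ofReal |∫ x in Q.carrier, f₁ x ∂σ₁| *
          ENNReal.ofReal |∫ x in Q.carrier, f₂ x ∂σ₂|) ≤
      c * eLpNorm f₁ (ENNReal.ofReal p₁) σ₁ * eLpNorm f₂ (ENNReal.ofReal p₂) σ₂

/-- The trilinear embedding inequality
`∑_Q K(Q) ∏_i |∫_Q f_i dσ_i| ≤ c ∏_i ‖f_i‖_{L^{p_i}(σ_i)}`. -/
def trilinearEmbedding (K : DyadicCube n → ℝ≥0∞) (σ : Fin 3 → Measure (RN n))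
    (p : Fin 3 → ℝ) (c : ℝ≥0∞) : Prop :=
  ∀ f : (i : Fin 3) → RN n → ℝ,
    (∀ i, MemLp (f i) (ENNReal.ofReal (p i)) (σ i)) →
    (∑' Q : DyadicCube n,
        K Q * ∏ i : Fin 3, ENNReal.ofReal |∫ x in Q.carrier, f i x ∂(σ i)|) ≤
      c * ∏ i : Fin 3, eLpNorm (f i) (ENNReal.ofReal (p i)) (σ i)

/-- Sawyer's checking condition for the pair `(σ₁, σ₂)`, with the finiteness clauses. -/
def sawyerTest (K : DyadicCube n → ℝ≥0∞) (σ₁ σ₂ : Measure (RN n))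
    (p₁ p₂ : ℝ) (c : ℝ≥0∞) : Prop :=
  ∀ Q : DyadicCube n,
    ((∫⁻ x in Q.carrier, kernelSum K σ₁ Q x ^ dual p₂ ∂σ₂) ^ (1 / dual p₂) ≤
        c * σ₁ Q.carrier ^ (1 / p₁) ∧ c * σ₁ Q.carrier ^ (1 / p₁) < ⊤) ∧
    ((∫⁻ x in Q.carrier, kernelSum K σ₂ Q x ^ dual p₁ ∂σ₁) ^ (1 / dual p₁) ≤
        c * σ₂ Q.carrier ^ (1 / p₂) ∧ c * σ₂ Q.carrier ^ (1 / p₂) < ⊤)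

/-- The Wolff-potential checking condition for the pair `(σ₁, σ₂)`:
`‖W^{p₂'}_{K,σ₂}[σ₁]^{1/p₂'}‖_{L^r(σ₁)} ≤ c` and `‖W^{p₁'}_{K,σ₁}[σ₂]^{1/p₁'}‖_{L^r(σ₂)} ≤ c`. -/
def wolffTest (K : DyadicCube n → ℝ≥0∞) (σ₁ σ₂ : Measure (RN n))
    (p₁ p₂ r : ℝ) (c : ℝ≥0∞) : Prop :=
  (∫⁻ x, (wolff K σ₂ σ₁ (dual p₂) x ^ (1 / dual p₂)) ^ r ∂σ₁) ^ (1 / r) ≤ c ∧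
  (∫⁻ x, (wolff K σ₁ σ₂ (dual p₁) x ^ (1 / dual p₁)) ^ r ∂σ₂) ^ (1 / r) ≤ c

/-- Condition (b) of the trilinear embedding theorem, without the finiteness clauses. -/
def trilinearTestLe (K : DyadicCube n → ℝ≥0∞) (σ : Fin 3 → Measure (RN n))
    (p : Fin 3 → ℝ) (c : ℝ≥0∞) : Prop :=
  ∀ e : Equiv.Perm (Fin 3),
    (1 ≤ 1 / p (e 0) + 1 / p (e 1) → ∀ Q : DyadicCube n,
      (∫⁻ x in Q.carrier,
          kernelSum (KQ K (σ (e 2)) Q) (σ (e 0)) Q x ^ dual (p (e 1)) ∂(σ (e 1))) ^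
            (1 / dual (p (e 1))) ≤
        c * σ (e 0) Q.carrier ^ (1 / p (e 0)) * σ (e 2) Q.carrier ^ (1 / p (e 2)) ∧
      (∫⁻ x in Q.carrier,
          kernelSum (KQ K (σ (e 2)) Q) (σ (e 1)) Q x ^ dual (p (e 0)) ∂(σ (e 0))) ^
            (1 / dual (p (e 0))) ≤
        c * σ (e 1) Q.carrier ^ (1 / p (e 1)) * σ (e 2) Q.carrier ^ (1 / p (e 2))) ∧
    (1 / p (e 0) + 1 / p (e 1) < 1 → ∀ Q : DyadicCube n, ∀ r : ℝ,
      1 / r + 1 / p (e 0) + 1 / p (e 1) = 1 →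
      (∫⁻ x, (wolff (KQ K (σ (e 2)) Q) (σ (e 1)) (σ (e 0)) (dual (p (e 1))) x ^
          (1 / dual (p (e 1)))) ^ r ∂(σ (e 0))) ^ (1 / r) ≤
        c * σ (e 2) Q.carrier ^ (1 / p (e 2)) ∧
      (∫⁻ x, (wolff (KQ K (σ (e 2)) Q) (σ (e 0)) (σ (e 1)) (dual (p (e 0))) x ^
          (1 / dual (p (e 0)))) ^ r ∂(σ (e 1))) ^ (1 / r) ≤
        c * σ (e 2) Q.carrier ^ (1 / p (e 2)))

/-- Condition (b) of the trilinear embedding theorem, with the finiteness clauses. -/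
def trilinearTest (K : DyadicCube n → ℝ≥0∞) (σ : Fin 3 → Measure (RN n))
    (p : Fin 3 → ℝ) (c : ℝ≥0∞) : Prop :=
  trilinearTestLe K σ p c ∧
  ∀ e : Equiv.Perm (Fin 3),
    (1 ≤ 1 / p (e 0) + 1 / p (e 1) → ∀ Q : DyadicCube n,
      c * σ (e 0) Q.carrier ^ (1 / p (e 0)) * σ (e 2) Q.carrier ^ (1 / p (e 2)) < ⊤ ∧
      c * σ (e 1) Q.carrier ^ (1 / p (e 1)) * σ (e 2) Q.carrier ^ (1 / p (e 2)) < ⊤) ∧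
    (1 / p (e 0) + 1 / p (e 1) < 1 → ∀ Q : DyadicCube n,
      c * σ (e 2) Q.carrier ^ (1 / p (e 2)) < ⊤)

end DyadicCube

/-! A cube `H' ∈ ch¹_{F₃}(H)` has `⨍_{H'} f₁ dσ₁ ≤ 2 ⨍_F f₁ dσ₁` for its stopping parent
`F = π_{F₁}(H')`, since otherwise `H'` would lie in a child of `F` in `F₁`. Grouping the terms
by `F`: as `H = π_{F₃}(F)` is determined by `F`, the cubes `H'` with a common `F` are distinct
children of one `H`, hence pairwise disjoint subsets of `F`, so their `σ₁`-measures add up to at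
most `σ₁(F)`. -/

theorem tsum_comp_mul_measure_le_of_disjoint_fibers {ι κ α : Type*} [MeasurableSpace α]
    (μ : Measure α) (φ : ι → κ) (c : κ → ℝ≥0∞) {s : ι → Set α} {t : κ → Set α}
    (hs : ∀ i, MeasurableSet (s i)) (hst : ∀ i, s i ⊆ t (φ i))
    (hdisj : ∀ i j, φ i = φ j → i ≠ j → Disjoint (s i) (s j)) :
    ∑' i, c (φ i) * μ (s i) ≤ ∑' k, c k * μ (t k) := by
  have hfiber : ∀ k, ∑' i : φ ⁻¹' {k}, μ (s i) ≤ μ (t k) := fun k => calc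
    ∑' i : φ ⁻¹' {k}, μ (s i) ≤ μ (⋃ i : φ ⁻¹' {k}, s i) :=
      tsum_meas_le_meas_iUnion_of_disjoint μ (fun i => hs i)
        fun i j hij => hdisj i j (i.2.trans j.2.symm) (Subtype.coe_ne_coe.2 hij)
    _ ≤ μ (t k) := measure_mono <| iUnion_subset fun ⟨i, hi⟩ =>
      mem_singleton_iff.1 hi ▸ hst i
  calc ∑' i, c (φ i) * μ (s i)
      = ∑' k, ∑' i : φ ⁻¹' {k}, c (φ i) * μ (s i) := (ENNReal.tsum_fiberwise _ φ).symm
    _ = ∑' k, c k * ∑' i : φ ⁻¹' {k}, μ (s i) := by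
      refine tsum_congr fun k => ?_
      rw [← ENNReal.tsum_mul_left]
      exact tsum_congr fun i => by rw [i.2]
    _ ≤ ∑' k, c k * μ (t k) := ENNReal.tsum_le_tsum fun k => mul_le_mul_right (hfiber k) _

namespace DyadicCube

variable {n : ℕ}

lemma carrier_eq_pi (Q : DyadicCube n) :
    Q.carrier = univ.pi fun i => Ico ((Q.m i : ℝ) * 2 ^ (-Q.k)) ((Q.m i + 1) * 2 ^ (-Q.k)) := by
  ext x
  simp [carrier]

lemma measurableSet_carrier (Q : DyadicCube n) : MeasurableSet Q.carrier := by
  rw [carrier_eq_pi]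
  exact MeasurableSet.univ_pi fun _ => measurableSet_Ico

lemma volume_carrier (Q : DyadicCube n) :
    volume Q.carrier = ENNReal.ofReal (2 ^ (-Q.k)) ^ n := by
  simp [carrier_eq_pi, Real.volume_pi_Ico, add_mul]

lemma mem_carrier_iff_floor {Q : DyadicCube n} {x : RN n} :
    x ∈ Q.carrier ↔ ∀ i, ⌊x i * 2 ^ Q.k⌋ = Q.m i := by
  have h2 : (0 : ℝ) < 2 ^ Q.k := by positivity
  simp only [carrier, mem_ofPred_eq, Int.floor_eq_iff, zpow_neg, ← div_eq_mul_inv,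
    div_le_iff₀ h2, lt_div_iff₀ h2]

lemma carrier_nonempty (Q : DyadicCube n) : Q.carrier.Nonempty :=
  ⟨fun i => Q.m i * 2 ^ (-Q.k), mem_carrier_iff_floor.2 fun i => by
    rw [mul_assoc, ← zpow_add₀ two_ne_zero, neg_add_cancel, zpow_zero, mul_one, Int.floor_intCast]⟩

lemma floor_mul_two_zpow_eq_div {k k' : ℤ} (hk : k ≤ k') (t : ℝ) :
    ⌊t * 2 ^ k⌋ = ⌊t * 2 ^ k'⌋ / 2 ^ (k' - k).toNat := by
  rw [show (2 : ℤ) ^ (k' - k).toNat = ((2 ^ (k' - k).toNat : ℕ) : ℤ) by push_cast; rfl,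
    ← Int.floor_div_natCast]
  congr 1
  push_cast
  rw [← zpow_natCast, Int.toNat_of_nonneg (by omega), mul_div_assoc, ← zpow_sub₀ two_ne_zero,
    sub_sub_cancel k' k]

lemma carrier_subset_of_k_le {P Q : DyadicCube n} (hk : Q.k ≤ P.k)
    (h : (P.carrier ∩ Q.carrier).Nonempty) : P.carrier ⊆ Q.carrier := by
  obtain ⟨x, hxP, hxQ⟩ := h
  intro y hy
  rw [mem_carrier_iff_floor] at hxP hxQ hy ⊢
  intro i
  rw [← hxQ i, floor_mul_two_zpow_eq_div hk, floor_mul_two_zpow_eq_div hk, hy i, hxP i]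

lemma subset_or_subset_of_nonempty_inter {P Q : DyadicCube n}
    (h : (P.carrier ∩ Q.carrier).Nonempty) : P.carrier ⊆ Q.carrier ∨ Q.carrier ⊆ P.carrier :=
  (le_total Q.k P.k).imp (carrier_subset_of_k_le · h)
    (carrier_subset_of_k_le · (inter_comm P.carrier Q.carrier ▸ h))

lemma k_le_of_carrier_subset (hn : n ≠ 0) {P Q : DyadicCube n}
    (h : P.carrier ⊆ Q.carrier) : Q.k ≤ P.k := by
  have hvol := measure_mono (μ := volume) h
  rw [volume_carrier, volume_carrier, ENNReal.pow_le_pow_left_iff hn,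
    ENNReal.ofReal_le_ofReal_iff (by positivity),
    zpow_le_zpow_iff_right₀ (by norm_num : (1 : ℝ) < 2)] at hvol
  omega

lemma eq_of_carrier_eq (hn : n ≠ 0) {P Q : DyadicCube n} (h : P.carrier = Q.carrier) :
    P = Q := by
  have hk : P.k = Q.k :=
    le_antisymm (k_le_of_carrier_subset hn h.superset) (k_le_of_carrier_subset hn h.subset)
  obtain ⟨x, hxP⟩ := P.carrier_nonempty
  have hxQ := mem_carrier_iff_floor.1 (h ▸ hxP)
  rw [mem_carrier_iff_floor] at hxP
  cases P; cases Q
  simp only at hk hxP hxQ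
  subst hk
  congr
  funext i
  exact (hxP i).symm.trans (hxQ i)

lemma exists_minimal_carrier (hn : n ≠ 0) {p : DyadicCube n → Prop} {Q : DyadicCube n}
    (hp : ∀ R, p R → Q.carrier ⊆ R.carrier) (hne : ∃ R, p R) :
    ∃ R, p R ∧ ∀ R', p R' → R.carrier ⊆ R'.carrier := by
  obtain ⟨_, ⟨R, hR, rfl⟩, hmax⟩ := Int.exists_greatest_of_bdd (P := fun z => ∃ R, p R ∧ R.k = z)
    ⟨Q.k, fun _ ⟨R, hR, hk⟩ => hk ▸ k_le_of_carrier_subset hn (hp R hR)⟩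
    (hne.elim fun R hR => ⟨R.k, R, hR, rfl⟩)
  exact ⟨R, hR, fun R' hR' => carrier_subset_of_k_le (hmax _ ⟨R', hR', rfl⟩)
    (Q.carrier_nonempty.mono (subset_inter (hp R hR) (hp R' hR')))⟩

lemma exists_maximal_carrier (hn : n ≠ 0) {p : DyadicCube n → Prop} {Q B : DyadicCube n}
    (hp : ∀ R, p R → Q.carrier ⊆ R.carrier ∧ R.carrier ⊆ B.carrier) (hne : ∃ R, p R) :
    ∃ R, p R ∧ ∀ R', p R' → R'.carrier ⊆ R.carrier := by
  obtain ⟨_, ⟨R, hR, rfl⟩, hmin⟩ := Int.exists_least_of_bdd (P := fun z => ∃ R, p R ∧ R.k = z)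
    ⟨B.k, fun _ ⟨R, hR, hk⟩ => hk ▸ k_le_of_carrier_subset hn (hp R hR).2⟩
    (hne.elim fun R hR => ⟨R.k, R, hR, rfl⟩)
  exact ⟨R, hR, fun R' hR' => carrier_subset_of_k_le (hmin _ ⟨R', hR', rfl⟩)
    (Q.carrier_nonempty.mono (subset_inter (hp R' hR').1 (hp R hR).1))⟩

section Principal

variable {σ : Measure (RN n)} {f : RN n → ℝ} {Q₀ Q F H : DyadicCube n}

lemma avg_congr_carrier {P Q : DyadicCube n} (h : P.carrier = Q.carrier) :
    avg σ f P = avg σ f Q := by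
  rw [avg, avg, h]

lemma carrier_ne_of_mem_chPrin (hQ : Q ∈ chPrin σ f F) : Q.carrier ≠ F.carrier := fun h =>
  (le_mul_of_one_le_left zero_le one_le_two).not_gt (avg_congr_carrier h ▸ hQ.2.1)

lemma ne_zero_of_mem_chPrin (hQ : Q ∈ chPrin σ f F) : n ≠ 0 := by
  rintro rfl
  exact carrier_ne_of_mem_chPrin hQ
    (Q.carrier_nonempty.eq_univ.trans F.carrier_nonempty.eq_univ.symm)

lemma chPrin_pairwiseDisjoint : (chPrin σ f F).PairwiseDisjoint carrier := by
  intro A hA B hB hAB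
  rw [Function.onFun, disjoint_iff_inter_eq_empty, ← not_nonempty_iff_eq_empty]
  intro hAB'
  rcases subset_or_subset_of_nonempty_inter hAB' with h | h
  · exact hAB (hA.2.2 B hB.1 h hB.2.1).symm
  · exact hAB (hB.2.2 A hA.1 h hA.2.1)

lemma exists_mem_chPrin_of_lt (hn : n ≠ 0) (hQF : Q.carrier ⊆ F.carrier)
    (hlt : 2 * avg σ f F < avg σ f Q) : ∃ R ∈ chPrin σ f F, Q.carrier ⊆ R.carrier := by
  obtain ⟨R, ⟨hRF, hQR, hRlt⟩, hmax⟩ := exists_maximal_carrier hn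
    (p := fun R => R.carrier ⊆ F.carrier ∧ Q.carrier ⊆ R.carrier ∧ 2 * avg σ f F < avg σ f R)
    (fun R hR => ⟨hR.2.1, hR.1⟩) ⟨Q, hQF, subset_rfl, hlt⟩
  exact ⟨R, ⟨hRF, hRlt, fun R' hR'F hRR' hR'lt =>
    eq_of_carrier_eq hn ((hmax R' ⟨hR'F, hQR.trans hRR', hR'lt⟩).antisymm hRR')⟩, hQR⟩

lemma self_mem_principal : Q₀ ∈ principal σ f Q₀ :=
  mem_iUnion.2 ⟨0, rfl⟩

lemma mem_principal_of_mem_chPrin (hF : F ∈ principal σ f Q₀) (hQ : Q ∈ chPrin σ f F) :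
    Q ∈ principal σ f Q₀ := by
  obtain ⟨k, hk⟩ := mem_iUnion.1 hF
  exact mem_iUnion.2 ⟨k + 1, mem_iUnion₂.2 ⟨F, hk, hQ⟩⟩

lemma carrier_subset_of_mem_principal (hF : F ∈ principal σ f Q₀) :
    F.carrier ⊆ Q₀.carrier := by
  obtain ⟨k, hk⟩ := mem_iUnion.1 hF
  induction k generalizing F with
  | zero => rw [mem_singleton_iff.1 hk]
  | succ k ih =>
    obtain ⟨G, hG, hFG⟩ := mem_iUnion₂.1 hk
    exact hFG.1.trans (ih (mem_iUnion.2 ⟨k, hG⟩) hG)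

lemma stoppingParent_mem_principal : stoppingParent σ f Q₀ Q ∈ principal σ f Q₀ := by
  unfold stoppingParent
  split_ifs with h
  exacts [h.choose_spec.1, self_mem_principal]

lemma isStoppingParent_stoppingParent (hn : n ≠ 0) (hQ : Q.carrier ⊆ Q₀.carrier) :
    IsStoppingParent σ f Q₀ Q (stoppingParent σ f Q₀ Q) := by
  have h : ∃ F, IsStoppingParent σ f Q₀ Q F :=
    exists_minimal_carrier hn (p := fun F => F ∈ principal σ f Q₀ ∧ Q.carrier ⊆ F.carrier)
      (fun _ hF => hF.2) ⟨Q₀, self_mem_principal, hQ⟩ |>.imp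
      fun F ⟨⟨hF, hQF⟩, hmin⟩ => ⟨hF, hQF, fun F' hF' hQF' => hmin F' ⟨hF', hQF'⟩⟩
  rw [stoppingParent, dif_pos h]
  exact h.choose_spec

lemma avg_le_two_mul_avg_stoppingParent (hn : n ≠ 0) (hQ : Q.carrier ⊆ Q₀.carrier) :
    avg σ f Q ≤ 2 * avg σ f (stoppingParent σ f Q₀ Q) := by
  obtain ⟨hF, hQF, hmin⟩ := isStoppingParent_stoppingParent (σ := σ) (f := f) hn hQ
  by_contra! hlt
  obtain ⟨R, hR, hQR⟩ := exists_mem_chPrin_of_lt hn hQF hlt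
  exact carrier_ne_of_mem_chPrin hR
    (hR.1.antisymm (hmin R (mem_principal_of_mem_chPrin hF hR) hQR))

end Principal

lemma eq_of_mem_chStop_of_stoppingParent_eq {σ₁ σ₃ : Measure (RN n)} {f₁ f₃ : RN n → ℝ}
    {Q₀ A B H₁ H₂ : DyadicCube n} (hA : A ∈ chStop σ₁ σ₃ f₁ f₃ Q₀ H₁)
    (hB : B ∈ chStop σ₁ σ₃ f₁ f₃ Q₀ H₂)
    (h : stoppingParent σ₁ f₁ Q₀ A = stoppingParent σ₁ f₁ Q₀ B) : H₁ = H₂ :=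
  hA.2.symm.trans (h ▸ hB.2)

end DyadicCube

open DyadicCube

theorem double_sum_children_le_general (n : ℕ) (p₁ : ℝ) (hp₁ : 1 < p₁)
    (σ₁ σ₃ : Measure (RN n)) (Q₀ : DyadicCube n) (f₁ f₃ : RN n → ℝ) :
    ∑' H : principal σ₃ f₃ Q₀, ∑' H' : chStop σ₁ σ₃ f₁ f₃ Q₀ H.1,
        avg σ₁ f₁ H'.1 ^ p₁ * σ₁ H'.1.carrier ≤
      ∑' F : principal σ₁ f₁ Q₀, (2 * avg σ₁ f₁ F.1) ^ p₁ * σ₁ F.1.carrier := by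
  let π₁ (q : Σ H : principal σ₃ f₃ Q₀, chStop σ₁ σ₃ f₁ f₃ Q₀ H.1) : principal σ₁ f₁ Q₀ :=
    ⟨stoppingParent σ₁ f₁ Q₀ q.2.1, stoppingParent_mem_principal⟩
  have hn (q : Σ H : principal σ₃ f₃ Q₀, chStop σ₁ σ₃ f₁ f₃ Q₀ H.1) : n ≠ 0 :=
    ne_zero_of_mem_chPrin q.2.2.1
  have hsub (q : Σ H : principal σ₃ f₃ Q₀, chStop σ₁ σ₃ f₁ f₃ Q₀ H.1) :
      q.2.1.carrier ⊆ Q₀.carrier :=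
    q.2.2.1.1.trans (carrier_subset_of_mem_principal q.1.2)
  calc _ = ∑' q : Σ H : principal σ₃ f₃ Q₀, chStop σ₁ σ₃ f₁ f₃ Q₀ H.1,
        avg σ₁ f₁ q.2.1 ^ p₁ * σ₁ q.2.1.carrier := (ENNReal.tsum_sigma' _).symm
    _ ≤ ∑' q, (2 * avg σ₁ f₁ (π₁ q).1) ^ p₁ * σ₁ q.2.1.carrier := by
        gcongr with q
        exact avg_le_two_mul_avg_stoppingParent (hn q) (hsub q)
    _ ≤ _ := by
      refine tsum_comp_mul_measure_le_of_disjoint_fibers σ₁ π₁ (fun F => (2 * avg σ₁ f₁ F.1) ^ p₁)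
        (fun q => measurableSet_carrier _)
        (fun q => (isStoppingParent_stoppingParent (hn q) (hsub q)).2.1) ?_
      rintro ⟨H₁, A⟩ ⟨H₂, B⟩ hπ hne
      obtain rfl : H₁ = H₂ :=
        Subtype.ext (eq_of_mem_chStop_of_stoppingParent_eq A.2 B.2 (congrArg Subtype.val hπ))
      exact chPrin_pairwiseDisjoint A.2.1 B.2.1 fun h => hne (Sigma.subtype_ext rfl h)

/-- Reorganizing the double sum over `H ∈ F₃` and `H' ∈ ch¹_{F₃}(H)`:
`∑_{H ∈ F₃} ∑_{H' ∈ ch¹_{F₃}(H)} (⨍_{H'} f₁ dσ₁)^{p₁} σ₁(H') ≤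
∑_{F ∈ F₁} (2 ⨍_F f₁ dσ₁)^{p₁} σ₁(F)`. -/
theorem double_sum_children_le (n : ℕ) (p₁ : ℝ) (hp₁ : 1 < p₁)
    (σ₁ σ₃ : Measure (RN n)) (Q₀ : DyadicCube n) (f₁ f₃ : RN n → ℝ)
    (hf₁ : MemLp f₁ (ENNReal.ofReal p₁) σ₁) (hf₁0 : ∀ x, 0 ≤ f₁ x)
    (hsupp₁ : Function.support f₁ ⊆ Q₀.carrier)
    (hf₃0 : ∀ x, 0 ≤ f₃ x) (hsupp₃ : Function.support f₃ ⊆ Q₀.carrier) :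
    ∑' H : principal σ₃ f₃ Q₀, ∑' H' : chStop σ₁ σ₃ f₁ f₃ Q₀ H.1,
        avg σ₁ f₁ H'.1 ^ p₁ * σ₁ H'.1.carrier ≤
      ∑' F : principal σ₁ f₁ Q₀, (2 * avg σ₁ f₁ F.1) ^ p₁ * σ₁ F.1.carrier :=
  double_sum_children_le_general n p₁ hp₁ σ₁ σ₃ Q₀ f₁ f₃
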